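/- arXiv:2504.05903 — 4 statements merged into one kernel-verified Lean document; each statement's English description precedes it below -/
import Mathlib

section
/- Let (X, {*^g}_{g∈G}) be a G-family of racks. Define on X × G the operations (x,g) * (y,h) = (x *^h y, h⁻¹gh) and (x,g)(x,h) = (x,gh) (group multiplication within each fiber {x} × G). Then X × G is a multiple group rack: (i) z * (ab) = (z * a) * b and z * (x, e) = z for a,b in the same fiber; (ii) (z * w) * v = (z * v) * (w * v) for all z,w,v; (iii) for each fiber {x} × G and each element v, the map a ↦ a * v sends {x} × G into a single fiber and is a group homomorphism, i.e., (ab) * v = (a * v)(b * v). -/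
/-!
Every axiom splits into its two coordinates: on `X` it is one of the three
`G`-family axioms, and on `G` it is an identity about conjugation
`g ↦ h⁻¹ g h`, which is a group automorphism and a right action of `G` on itself.
-/

namespace GFamilyOfRacks

variable {G X : Type*} [Group G]

def associatedOp (star : G → X → X → X) (u v : X × G) : X × G :=
  (star v.2 u.1 v.1, v.2⁻¹ * u.2 * v.2)

variable (star : G → X → X → X)

theorem associatedOp_mul_right
    (h1 : ∀ (g h : G) (x y : X), star (g * h) x y = star h (star g x y) y)
    (z : X × G) (y : X) (g h : G) :
    associatedOp star z (y, g * h) = associatedOp star (associatedOp star z (y, g)) (y, h) := by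
  simp only [associatedOp, h1, mul_inv_rev, mul_assoc]

theorem associatedOp_one_right (h2 : ∀ x y : X, star 1 x y = x) (z : X × G) (y : X) :
    associatedOp star z (y, 1) = z := by
  simp [associatedOp, h2]

theorem associatedOp_self_distrib
    (h3 : ∀ (g h : G) (x y z : X),
      star h (star g x y) z = star (h⁻¹ * g * h) (star h x z) (star h y z))
    (z w v : X × G) :
    associatedOp star (associatedOp star z w) v
      = associatedOp star (associatedOp star z v) (associatedOp star w v) := by
  refine Prod.ext (h3 _ _ _ _ _) ?_
  simp only [associatedOp]
  group

theorem associatedOp_mul_left (x y : X) (g₁ g₂ h : G) :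
    associatedOp star (x, g₁ * g₂) (y, h)
      = (star h x y,
          (associatedOp star (x, g₁) (y, h)).2 * (associatedOp star (x, g₂) (y, h)).2) := by
  refine Prod.ext rfl ?_
  simp only [associatedOp]
  group

end GFamilyOfRacks

open GFamilyOfRacks in
/-- The associated multiple group rack `X × G` of a `G`-family of
racks, with `(x,g) * (y,h) = (x *^h y, h⁻¹gh)` and fiberwise multiplication
`(x,g)(x,h) = (x,gh)`, satisfies the three multiple group rack axioms. -/
theorem associated_multiple_group_rack
    (G : Type*) [Group G] (X : Type*) (star : G → X → X → X)
    (h1 : ∀ (g h : G) (x y : X), star (g * h) x y = star h (star g x y) y)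
    (h2 : ∀ (x y : X), star 1 x y = x)
    (h3 : ∀ (g h : G) (x y z : X),
      star h (star g x y) z = star (h⁻¹ * g * h) (star h x z) (star h y z)) :
    -- the operation on X × G
    ∀ ast : X × G → X × G → X × G,
      (∀ u v : X × G, ast u v = (star v.2 u.1 v.1, v.2⁻¹ * u.2 * v.2)) →
      -- (i) z * (ab) = (z * a) * b and z * (y, e) = z
      (∀ (z : X × G) (y : X) (g h : G),
        ast z (y, g * h) = ast (ast z (y, g)) (y, h) ∧ ast z (y, 1) = z) ∧
      -- (ii) self-distributivity
      (∀ z w v : X × G, ast (ast z w) v = ast (ast z v) (ast w v)) ∧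
      -- (iii) right translation maps each fiber {x} × G into the single fiber
      -- {x *^h y} × G and is a group homomorphism there
      (∀ (x y : X) (h g₁ g₂ : G),
        (ast (x, g₁) (y, h)).1 = star h x y ∧
        ast (x, g₁ * g₂) (y, h)
          = (star h x y, (ast (x, g₁) (y, h)).2 * (ast (x, g₂) (y, h)).2)) := by
  intro ast hast
  obtain rfl : ast = associatedOp star := funext₂ hast
  exact ⟨fun z y g h =>
      ⟨associatedOp_mul_right star h1 z y g h, associatedOp_one_right star h2 z y⟩,
    associatedOp_self_distrib star h3,
    fun x y h g₁ g₂ => ⟨rfl, associatedOp_mul_left star x y g₁ g₂ h⟩⟩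
end

section
/- Let (X, {*^g}_{g∈G}) be a G-family of racks and N a normal subgroup of G. On X × (G ⋉ N) (where G ⋉ N is the semidirect product with multiplication (g₁,n₁)(g₂,n₂) = (g₁g₂, (g₂⁻¹n₁g₂)n₂)), define (x,(g₁,n₁)) * (y,(g₂,n₂)) = (x *^{g₂n₂} y, ((g₂n₂)⁻¹g₁(g₂n₂), (g₂n₂)⁻¹n₁(g₂n₂))). Then for all z ∈ X × (G ⋉ N), y ∈ X, and (g₁,n₁),(g₂,n₂) ∈ G ⋉ N: z * ((y,(g₁,n₁))(y,(g₂,n₂))) = (z * (y,(g₁,n₁))) * (y,(g₂,n₂)), and z * (y,(e,e)) = z. -/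
/-!
The operation `z * (y, p)` depends on `p = (g, n)` only through the product `g n ∈ G`, and
`(g, n) ↦ g n` is a homomorphism `G ⋉ N → G`. So both identities reduce to the laws
`x *^{gh} y = (x *^g y) *^h y` and `x *^e y = x` of the rack family, together with the fact that
conjugation `g ↦ g^h` is a right action of `G`.
-/

/-- Right conjugate `g⁻¹ n g` of an element of a normal subgroup. -/
def conjN {G : Type*} [Group G] {N : Subgroup G} (hN : N.Normal) (n : N) (g : G) : N :=
  ⟨g⁻¹ * (n : G) * g, hN.conj_mem' n n.2 g⟩

/-- Multiplication of the semidirect product `G ⋉ N`: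
`(g₁,n₁)(g₂,n₂) = (g₁g₂, n₁^{g₂} n₂)`. -/
def sdMul {G : Type*} [Group G] {N : Subgroup G} (hN : N.Normal) (p q : G × N) : G × N :=
  (p.1 * q.1, conjN hN p.2 q.1 * q.2)

/-- The operation on `X × (G ⋉ N)`:
`(x,(g₁,n₁)) * (y,(g₂,n₂)) = (x *^{g₂n₂} y, (g₁^{g₂n₂}, n₁^{g₂n₂}))`. -/
def astXN {G X : Type*} [Group G] {N : Subgroup G} (hN : N.Normal)
    (star : G → X → X → X) (u v : X × (G × N)) : X × (G × N) :=
  (star (v.2.1 * (v.2.2 : G)) u.1 v.1,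
    ((v.2.1 * (v.2.2 : G))⁻¹ * u.2.1 * (v.2.1 * (v.2.2 : G)),
      conjN hN u.2.2 (v.2.1 * (v.2.2 : G))))

section

variable {G : Type*} [Group G] {N : Subgroup G} (hN : N.Normal)

@[simp]
theorem coe_conjN (n : N) (g : G) : (conjN hN n g : G) = g⁻¹ * n * g := rfl

theorem conjN_one (n : N) : conjN hN n 1 = n := by
  ext; simp

theorem conjN_mul (n : N) (g h : G) : conjN hN n (g * h) = conjN hN (conjN hN n g) h := by
  ext; simp only [coe_conjN]; group

theorem sdMul_fst_mul_snd (p q : G × N) :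
    (sdMul hN p q).1 * ((sdMul hN p q).2 : G) = (p.1 * p.2) * (q.1 * q.2) := by
  simp only [sdMul, Subgroup.coe_mul, coe_conjN]; group

variable {X : Type*} (star : G → X → X → X)

theorem astXN_sdMul (star_mul : ∀ (g h : G) (x y : X), star (g * h) x y = star h (star g x y) y)
    (z : X × (G × N)) (y : X) (p q : G × N) :
    astXN hN star z (y, sdMul hN p q) = astXN hN star (astXN hN star z (y, p)) (y, q) := by
  simp only [astXN, sdMul_fst_mul_snd, star_mul, conjN_mul, Prod.mk.injEq, true_and, and_true]
  group

theorem astXN_one (star_one : ∀ (x y : X), star 1 x y = x) (z : X × (G × N)) (y : X) :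
    astXN hN star z (y, (1, 1)) = z := by
  simp [astXN, conjN_one, star_one]

end

theorem astXN_axiom_i_general
    (G : Type*) [Group G] (X : Type*) (star : G → X → X → X)
    (h1 : ∀ (g h : G) (x y : X), star (g * h) x y = star h (star g x y) y)
    (h2 : ∀ (x y : X), star 1 x y = x)
    (N : Subgroup G) (hN : N.Normal) :
    (∀ (z : X × (G × N)) (y : X) (p q : G × N),
      astXN hN star z (y, sdMul hN p q) = astXN hN star (astXN hN star z (y, p)) (y, q)) ∧
    (∀ (z : X × (G × N)) (y : X), astXN hN star z (y, (1, 1)) = z) :=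
  ⟨astXN_sdMul hN star h1, astXN_one hN star h2⟩

/-- Axiom (i) for `X × (G ⋉ N)`:
`z * (ab) = (z * a) * b` for `a, b` in a common fiber, and `z * (y,(e,e)) = z`. -/
theorem astXN_axiom_i
    (G : Type*) [Group G] (X : Type*) (star : G → X → X → X)
    (h1 : ∀ (g h : G) (x y : X), star (g * h) x y = star h (star g x y) y)
    (h2 : ∀ (x y : X), star 1 x y = x)
    (h3 : ∀ (g h : G) (x y z : X),
      star h (star g x y) z = star (h⁻¹ * g * h) (star h x z) (star h y z))
    (N : Subgroup G) (hN : N.Normal) :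
    (∀ (z : X × (G × N)) (y : X) (p q : G × N),
      astXN hN star z (y, sdMul hN p q) = astXN hN star (astXN hN star z (y, p)) (y, q)) ∧
    (∀ (z : X × (G × N)) (y : X), astXN hN star z (y, (1, 1)) = z) :=
  astXN_axiom_i_general G X star h1 h2 N hN
end

section
/- Let (X, {*^g}_{g∈G}) be a G-family of racks and N ⊴ G. With the operation (x,(g₁,n₁)) * (y,(g₂,n₂)) = (x *^{g₂n₂} y, (g₁^{g₂n₂}, n₁^{g₂n₂})) on X × (G ⋉ N) (where g^h = h⁻¹gh), the self-distributivity law holds: (u * v) * w = (u * w) * (v * w) for all u,v,w ∈ X × (G ⋉ N). -/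
/-! The three components of `astXN` are all governed by the collapse `(g, n) ↦ g n` of `G ⋉ N`
onto `G`: the rack component is acted on through it, and it turns `astXN` into right
conjugation in `G`. Self-distributivity of the rack component is then axiom (iii) of the
`G`-family, and that of the group components is self-distributivity of conjugation. -/

theorem conj_conj_eq_conj_conj {G : Type*} [Group G] (a b c : G) :
    c⁻¹ * (b⁻¹ * a * b) * c = (c⁻¹ * b * c)⁻¹ * (c⁻¹ * a * c) * (c⁻¹ * b * c) := by
  group

section

variable {G X : Type*} [Group G] {N : Subgroup G} (hN : N.Normal) (star : G → X → X → X)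

def sdCollapse (p : G × N) : G := p.1 * p.2

theorem astXN_fst (u v : X × (G × N)) :
    (astXN hN star u v).1 = star (sdCollapse v.2) u.1 v.1 := rfl

theorem astXN_snd_fst (u v : X × (G × N)) :
    (astXN hN star u v).2.1 = (sdCollapse v.2)⁻¹ * u.2.1 * sdCollapse v.2 := rfl

theorem coe_astXN_snd_snd (u v : X × (G × N)) :
    ((astXN hN star u v).2.2 : G) = (sdCollapse v.2)⁻¹ * u.2.2 * sdCollapse v.2 := rfl

theorem sdCollapse_astXN (u v : X × (G × N)) :
    sdCollapse (astXN hN star u v).2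
      = (sdCollapse v.2)⁻¹ * sdCollapse u.2 * sdCollapse v.2 := by
  simp only [sdCollapse, astXN_snd_fst, coe_astXN_snd_snd]
  group

end

theorem astXN_self_distrib_general
    (G : Type*) [Group G] (X : Type*) (star : G → X → X → X)
    (h3 : ∀ (g h : G) (x y z : X),
      star h (star g x y) z = star (h⁻¹ * g * h) (star h x z) (star h y z))
    (N : Subgroup G) (hN : N.Normal) :
    ∀ u v w : X × (G × N),
      astXN hN star (astXN hN star u v) w
        = astXN hN star (astXN hN star u w) (astXN hN star v w) := by
  intro u v w
  ext
  · simp only [astXN_fst, sdCollapse_astXN]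
    exact h3 _ _ _ _ _
  · simp only [astXN_snd_fst, sdCollapse_astXN]
    exact conj_conj_eq_conj_conj _ _ _
  · simp only [coe_astXN_snd_snd, sdCollapse_astXN]
    exact conj_conj_eq_conj_conj _ _ _

/-- Axiom (ii) for `X × (G ⋉ N)`: self-distributivity
`(u * v) * w = (u * w) * (v * w)`. -/
theorem astXN_self_distrib
    (G : Type*) [Group G] (X : Type*) (star : G → X → X → X)
    (h1 : ∀ (g h : G) (x y : X), star (g * h) x y = star h (star g x y) y)
    (h2 : ∀ (x y : X), star 1 x y = x)
    (h3 : ∀ (g h : G) (x y z : X),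
      star h (star g x y) z = star (h⁻¹ * g * h) (star h x z) (star h y z))
    (N : Subgroup G) (hN : N.Normal) :
    ∀ u v w : X × (G × N),
      astXN hN star (astXN hN star u v) w
        = astXN hN star (astXN hN star u w) (astXN hN star v w) :=
  astXN_self_distrib_general G X star h3 N hN
end

section
/- Let (X, {*^g}_{g∈G}) be a G-family of racks and N ⊴ G. Then X × (G ⋉ N), with operations (x,(g₁,n₁)) * (y,(g₂,n₂)) = (x *^{g₂n₂} y, (g₁^{g₂n₂}, n₁^{g₂n₂})) and (x,(g₁,n₁))(x,(g₂,n₂)) = (x,(g₁g₂, n₁^{g₂}n₂)), is a multiple group rack: it satisfies (i) z*(ab) = (z*a)*b and z*(y,(e,e)) = z for a,b in the same fiber; (ii) (u*v)*w = (u*w)*(v*w); (iii) for each fiber and each element w, right multiplication by w maps the fiber into a single fiber and satisfies (ab)*w = (a*w)(b*w). -/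
/-!
The map `π = sdProj : G ⋉ N → G, (g, n) ↦ g n` is multiplicative, and `astXN` is the product of the
rack operation `x *^{π b} y` on `X` with conjugation by `π b` on `G ⋉ N`, which is a right
action of `G` on `G ⋉ N` by automorphisms. Axiom (i) is then the G-family axiom
`x *^{gh} y = (x *^g y) *^h y` together with `π (p q) = π p π q`; axiom (ii) is the G-family
axiom `(x *^g y) *^h z = (x *^h z) *^{h⁻¹gh} (y *^h z)` together with
`π (q^h) = h⁻¹ (π q) h`; axiom (iii) says that conjugation respects the product of `G ⋉ N`.
-/

section SemidirectConj

variable {G : Type*} [Group G] {N : Subgroup G} (hN : N.Normal)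

def sdProj (p : G × N) : G := p.1 * (p.2 : G)

def sdConj (p : G × N) (a : G) : G × N := (a⁻¹ * p.1 * a, conjN hN p.2 a)

theorem sdProj_one : sdProj ((1, 1) : G × N) = 1 := by
  simp [sdProj]

theorem sdProj_sdMul (p q : G × N) : sdProj (sdMul hN p q) = sdProj p * sdProj q := by
  simp only [sdProj, sdMul, conjN, Subgroup.coe_mul]
  group

theorem sdProj_sdConj (p : G × N) (a : G) : sdProj (sdConj hN p a) = a⁻¹ * sdProj p * a := by
  simp only [sdProj, sdConj, conjN]
  group

theorem sdConj_one (p : G × N) : sdConj hN p 1 = p := by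
  ext <;> simp [sdConj, conjN]

theorem sdConj_sdConj (p : G × N) (a b : G) :
    sdConj hN (sdConj hN p a) b = sdConj hN p (a * b) := by
  ext
  · simp only [sdConj]
    group
  · simp only [sdConj, conjN]
    group

theorem sdConj_sdMul (p q : G × N) (a : G) :
    sdConj hN (sdMul hN p q) a = sdMul hN (sdConj hN p a) (sdConj hN q a) := by
  ext
  · simp only [sdConj, sdMul]
    group
  · simp only [sdConj, sdMul, conjN, Subgroup.coe_mul]
    group

theorem astXN_eq {X : Type*} (star : G → X → X → X) (u v : X × (G × N)) :
    astXN hN star u v = (star (sdProj v.2) u.1 v.1, sdConj hN u.2 (sdProj v.2)) :=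
  rfl

end SemidirectConj

/-- Theorem 5.1 of the paper: `X × (G ⋉ N)`, with
`(x,(g₁,n₁)) * (y,(g₂,n₂)) = (x *^{g₂n₂} y, (g₁^{g₂n₂}, n₁^{g₂n₂}))` and
fiberwise multiplication `(x,(g₁,n₁))(x,(g₂,n₂)) = (x,(g₁g₂, n₁^{g₂}n₂))`,
is a multiple group rack. -/
theorem astXN_multiple_group_rack
    (G : Type*) [Group G] (X : Type*) (star : G → X → X → X)
    (h1 : ∀ (g h : G) (x y : X), star (g * h) x y = star h (star g x y) y)
    (h2 : ∀ (x y : X), star 1 x y = x)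
    (h3 : ∀ (g h : G) (x y z : X),
      star h (star g x y) z = star (h⁻¹ * g * h) (star h x z) (star h y z))
    (N : Subgroup G) (hN : N.Normal) :
    -- (i)
    (∀ (z : X × (G × N)) (y : X) (p q : G × N),
      astXN hN star z (y, sdMul hN p q) = astXN hN star (astXN hN star z (y, p)) (y, q)) ∧
    (∀ (z : X × (G × N)) (y : X), astXN hN star z (y, (1, 1)) = z) ∧
    -- (ii)
    (∀ u v w : X × (G × N),
      astXN hN star (astXN hN star u v) w
        = astXN hN star (astXN hN star u w) (astXN hN star v w)) ∧
    -- (iii)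
    (∀ (x y : X) (q p₁ p₂ : G × N),
      (astXN hN star (x, p₁) (y, q)).1 = star (q.1 * (q.2 : G)) x y ∧
      astXN hN star (x, sdMul hN p₁ p₂) (y, q)
        = (star (q.1 * (q.2 : G)) x y,
            sdMul hN (astXN hN star (x, p₁) (y, q)).2 (astXN hN star (x, p₂) (y, q)).2)) := by
  refine ⟨fun z y p q => ?_, fun z y => ?_, fun u v w => ?_, fun x y q p₁ p₂ => ⟨rfl, ?_⟩⟩
  · simp only [astXN_eq, sdProj_sdMul, h1, sdConj_sdConj]
  · simp only [astXN_eq, sdProj_one, h2, sdConj_one]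
  · have hconj : sdProj w.2 * ((sdProj w.2)⁻¹ * sdProj v.2 * sdProj w.2)
        = sdProj v.2 * sdProj w.2 := by group
    simp only [astXN_eq, sdProj_sdConj, sdConj_sdConj, hconj]
    rw [h3]
  · simp only [astXN_eq, sdConj_sdMul]
    rfl
end
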